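/- arXiv:2307.01493 — 3 statements merged into one kernel-verified Lean document; each statement's English description precedes it below -/
import Mathlib

section
/- Let θ : ℤ²∖{0} → ℝ be radially symmetric (θ_k = θ_j whenever |k| = |j|) and have finite support, and let f : ℝ² → ℝ be twice differentiable at a point x ∈ ℝ². Then ∑_{k∈ℤ²∖{0}} θ_k² |k|⁻² ⟨k⊥, (Hess f)(x) · k⊥⟩ = (1/2) (∑_{k∈ℤ²∖{0}} θ_k²) · Δf(x), where Hess f(x) is the Hessian matrix of f at x and Δf(x) is its trace (the Laplacian). -/
/-!
The quarter turn `q k = (-k₂, k₁)` permutes `ℤ² ∖ {0}`, preserves `|k|` and hence `θ`, and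
`(q k)⊥ = k`. So the terms of `k` and `q k` add up to `θ_k² |k|⁻² (H(k⊥, k⊥) + H(k, k)) = θ_k² tr H`,
as `k⊥/|k|, k/|k|` is an orthonormal basis. Summing over `k` counts every term twice.
-/

def quarterTurn : {k : ℤ × ℤ // k ≠ 0} ≃ {k : ℤ × ℤ // k ≠ 0} where
  toFun k := ⟨(-k.1.2, k.1.1), by
    obtain ⟨⟨a, b⟩, h⟩ := k
    simp only [ne_eq, Prod.ext_iff, Prod.fst_zero, Prod.snd_zero] at h ⊢
    omega⟩
  invFun k := ⟨(k.1.2, -k.1.1), by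
    obtain ⟨⟨a, b⟩, h⟩ := k
    simp only [ne_eq, Prod.ext_iff, Prod.fst_zero, Prod.snd_zero] at h ⊢
    omega⟩
  left_inv k := by ext <;> simp
  right_inv k := by ext <;> simp

@[simp]
lemma quarterTurn_apply_fst (k : {k : ℤ × ℤ // k ≠ 0}) : (quarterTurn k).1.1 = -k.1.2 := rfl

@[simp]
lemma quarterTurn_apply_snd (k : {k : ℤ × ℤ // k ≠ 0}) : (quarterTurn k).1.2 = k.1.1 := rfl

lemma sq_add_sq_quarterTurn (k : {k : ℤ × ℤ // k ≠ 0}) :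
    ((quarterTurn k).1.1 : ℝ) ^ 2 + ((quarterTurn k).1.2 : ℝ) ^ 2
      = (k.1.1 : ℝ) ^ 2 + (k.1.2 : ℝ) ^ 2 := by
  push_cast [quarterTurn_apply_fst, quarterTurn_apply_snd]
  ring

lemma cast_sq_add_cast_sq_ne_zero (k : {k : ℤ × ℤ // k ≠ 0}) :
    (k.1.1 : ℝ) ^ 2 + (k.1.2 : ℝ) ^ 2 ≠ 0 := by
  obtain ⟨⟨a, b⟩, h⟩ := k
  rw [sq, sq, Ne, mul_self_add_mul_self_eq_zero]
  exact_mod_cast fun hab : a = 0 ∧ b = 0 ↦ h (Prod.ext hab.1 hab.2)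

lemma LinearMap.apply_perp_add_apply_self {R : Type*} [CommRing R]
    (A : R × R →ₗ[R] R × R →ₗ[R] R) (a b : R) :
    A (b, -a) (b, -a) + A (a, b) (a, b) = (a ^ 2 + b ^ 2) * (A (1, 0) (1, 0) + A (0, 1) (0, 1)) := by
  have hperp : ((b, -a) : R × R) = b • (1, 0) + (-a) • (0, 1) := by simp
  have hself : ((a, b) : R × R) = a • (1, 0) + b • (0, 1) := by simp
  rw [hperp, hself]
  simp only [map_add, map_smul, LinearMap.add_apply, LinearMap.smul_apply, smul_eq_mul]
  ring

lemma Equiv.tsum_add_comp {α M : Type*} [AddCommMonoid M] [TopologicalSpace M] [ContinuousAdd M]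
    [T2Space M] (e : α ≃ α) {g : α → M} (hg : Summable g) :
    ∑' k, (g k + g (e k)) = 2 • ∑' k, g k := by
  have hge : Summable fun k ↦ g (e k) := e.summable_iff.mpr hg
  rw [hg.tsum_add hge, e.tsum_eq, two_nsmul]

noncomputable def weightedPerpForm (θ : {k : ℤ × ℤ // k ≠ 0} → ℝ) (A : ℝ × ℝ →L[ℝ] ℝ × ℝ →L[ℝ] ℝ)
    (k : {k : ℤ × ℤ // k ≠ 0}) : ℝ :=
  θ k ^ 2 / ((k.1.1 : ℝ) ^ 2 + (k.1.2 : ℝ) ^ 2) *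
    A ((k.1.2 : ℝ), -(k.1.1 : ℝ)) ((k.1.2 : ℝ), -(k.1.1 : ℝ))

lemma weightedPerpForm_add_quarterTurn (θ : {k : ℤ × ℤ // k ≠ 0} → ℝ)
    (hθ : ∀ k, θ (quarterTurn k) = θ k) (A : ℝ × ℝ →L[ℝ] ℝ × ℝ →L[ℝ] ℝ)
    (k : {k : ℤ × ℤ // k ≠ 0}) :
    weightedPerpForm θ A k + weightedPerpForm θ A (quarterTurn k)
      = θ k ^ 2 * (A (1, 0) (1, 0) + A (0, 1) (0, 1)) := by
  have hA := A.toLinearMap₁₂.apply_perp_add_apply_self (k.1.1 : ℝ) (k.1.2 : ℝ)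
  simp only [ContinuousLinearMap.toLinearMap₁₂_apply_apply_apply] at hA
  rw [weightedPerpForm, weightedPerpForm, hθ, sq_add_sq_quarterTurn]
  push_cast [quarterTurn_apply_fst, quarterTurn_apply_snd, neg_neg]
  field_simp [cast_sq_add_cast_sq_ne_zero k]
  linear_combination θ k ^ 2 * hA

lemma summable_weightedPerpForm {θ : {k : ℤ × ℤ // k ≠ 0} → ℝ} (hfin : (Function.support θ).Finite)
    (A : ℝ × ℝ →L[ℝ] ℝ × ℝ →L[ℝ] ℝ) : Summable (weightedPerpForm θ A) :=
  summable_of_hasFiniteSupport <| hfin.subset fun k hk ↦ by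
    contrapose! hk
    simp [weightedPerpForm, Function.notMem_support.mp hk]

theorem stmt_1_general
    (θ : {k : ℤ × ℤ // k ≠ 0} → ℝ)
    (hrad : ∀ k j : {k : ℤ × ℤ // k ≠ 0},
      Real.sqrt ((k.1.1 : ℝ) ^ 2 + (k.1.2 : ℝ) ^ 2)
        = Real.sqrt ((j.1.1 : ℝ) ^ 2 + (j.1.2 : ℝ) ^ 2) → θ k = θ j)
    (hfin : (Function.support θ).Finite)
    (f : ℝ × ℝ → ℝ) (x : ℝ × ℝ) :
    ∑' k : {k : ℤ × ℤ // k ≠ 0},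
      (θ k) ^ 2 / ((k.1.1 : ℝ) ^ 2 + (k.1.2 : ℝ) ^ 2) *
        (fderiv ℝ (fderiv ℝ f) x ((k.1.2 : ℝ), -(k.1.1 : ℝ)) ((k.1.2 : ℝ), -(k.1.1 : ℝ)))
      = (1 / 2) * (∑' k : {k : ℤ × ℤ // k ≠ 0}, (θ k) ^ 2) *
          (fderiv ℝ (fderiv ℝ f) x ((1 : ℝ), (0 : ℝ)) ((1 : ℝ), (0 : ℝ))
            + fderiv ℝ (fderiv ℝ f) x ((0 : ℝ), (1 : ℝ)) ((0 : ℝ), (1 : ℝ))) := by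
  set A := fderiv ℝ (fderiv ℝ f) x
  change ∑' k, weightedPerpForm θ A k = _
  have hθ : ∀ k, θ (quarterTurn k) = θ k := fun k ↦
    hrad _ _ (congrArg Real.sqrt (sq_add_sq_quarterTurn k))
  have hpairs := quarterTurn.tsum_add_comp (summable_weightedPerpForm hfin A)
  rw [tsum_congr (weightedPerpForm_add_quarterTurn θ hθ A), tsum_mul_right] at hpairs
  linear_combination -hpairs / 2

/-- Let `θ : ℤ²∖{0} → ℝ` be radially symmetric and finitely supported,
and let `f : ℝ² → ℝ` be twice differentiable at `x`. Then
`∑ θ_k² |k|⁻² ⟨k⊥, Hess f(x) k⊥⟩ = (1/2) (∑ θ_k²) Δf(x)`,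
where `Δf(x)` is the trace of the Hessian. -/
theorem stmt_1
    (θ : {k : ℤ × ℤ // k ≠ 0} → ℝ)
    (hrad : ∀ k j : {k : ℤ × ℤ // k ≠ 0},
      Real.sqrt ((k.1.1 : ℝ) ^ 2 + (k.1.2 : ℝ) ^ 2)
        = Real.sqrt ((j.1.1 : ℝ) ^ 2 + (j.1.2 : ℝ) ^ 2) → θ k = θ j)
    (hfin : (Function.support θ).Finite)
    (f : ℝ × ℝ → ℝ) (x : ℝ × ℝ)
    (hf : DifferentiableAt ℝ f x)
    (hf' : DifferentiableAt ℝ (fderiv ℝ f) x) :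
    ∑' k : {k : ℤ × ℤ // k ≠ 0},
      (θ k) ^ 2 / ((k.1.1 : ℝ) ^ 2 + (k.1.2 : ℝ) ^ 2) *
        (fderiv ℝ (fderiv ℝ f) x ((k.1.2 : ℝ), -(k.1.1 : ℝ)) ((k.1.2 : ℝ), -(k.1.1 : ℝ)))
      = (1 / 2) * (∑' k : {k : ℤ × ℤ // k ≠ 0}, (θ k) ^ 2) *
          (fderiv ℝ (fderiv ℝ f) x ((1 : ℝ), (0 : ℝ)) ((1 : ℝ), (0 : ℝ))
            + fderiv ℝ (fderiv ℝ f) x ((0 : ℝ), (1 : ℝ)) ((0 : ℝ), (1 : ℝ))) :=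
  stmt_1_general θ hrad hfin f x
end

section
/- Let s₁, s₂ < 1 be real numbers with s₁ + s₂ > 0. There exists a constant C = C(s₁,s₂) > 0 such that for all finitely supported functions c, d : ℤ² → ℂ, writing (c⋆d)(k) := ∑_{j∈ℤ²} c(j) d(k−j) for their convolution, one has ∑_{k∈ℤ²} (1+|k|²)^{s₁+s₂−1} |(c⋆d)(k)|² ≤ C (∑_{k∈ℤ²} (1+|k|²)^{s₁} |c(k)|²) (∑_{k∈ℤ²} (1+|k|²)^{s₂} |d(k)|²). -/
open Finset
open scoped Pointwise

noncomputable def wt (k : ℤ × ℤ) : ℝ := 1 + (k.1 : ℝ) ^ 2 + (k.2 : ℝ) ^ 2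

lemma one_le_wt (k : ℤ × ℤ) : 1 ≤ wt k := by
  unfold wt; nlinarith [sq_nonneg ((k.1:ℝ)), sq_nonneg ((k.2:ℝ))]

lemma wt_pos (k : ℤ × ℤ) : 0 < wt k := lt_of_lt_of_le one_pos (one_le_wt k)

lemma wt_neg (k : ℤ × ℤ) : wt (-k) = wt k := by
  unfold wt; rw [Prod.fst_neg, Prod.snd_neg]; push_cast; ring

lemma wt_add_le (a b : ℤ × ℤ) : wt (a + b) ≤ 2 * wt a + 2 * wt b := by
  unfold wt
  rw [Prod.fst_add, Prod.snd_add]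
  push_cast
  nlinarith [sq_nonneg ((a.1:ℝ) - (b.1:ℝ)), sq_nonneg ((a.2:ℝ) - (b.2:ℝ))]

lemma wt_k_le (k j : ℤ × ℤ) : wt k ≤ 2 * wt j + 2 * wt (k - j) := by
  have := wt_add_le j (k - j); simpa using this

lemma wt_j_le (k j : ℤ × ℤ) : wt j ≤ 2 * wt k + 2 * wt (k - j) := by
  have := wt_add_le k (-(k - j))
  rw [wt_neg] at this; simpa using this

lemma wt_l_le (k j : ℤ × ℤ) : wt (k - j) ≤ 2 * wt k + 2 * wt j := by
  have := wt_add_le k (-j)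
  rw [wt_neg] at this; simpa [sub_eq_add_neg] using this

/-- ratio bound: if `x, y ≥ 1` are within a factor 4 of each other and `|t| ≤ 1`
then `x ^ (-t) ≤ 4 * y ^ (-t)`. -/
lemma ratio_rpow {x y t : ℝ} (hx : 1 ≤ x) (hy : 1 ≤ y)
    (hxy : x ≤ 4 * y) (hyx : y ≤ 4 * x) (ht : |t| ≤ 1) :
    x ^ (-t) ≤ 4 * y ^ (-t) := by
  have hx0 : (0:ℝ) < x := lt_of_lt_of_le one_pos hx
  have hy0 : (0:ℝ) < y := lt_of_lt_of_le one_pos hy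
  rcases le_or_gt 0 t with h | h
  · -- t ≥ 0 : use x ≥ y / 4
    have h4 : y / 4 ≤ x := by linarith
    have : x ^ (-t) ≤ (y / 4) ^ (-t) :=
      Real.rpow_le_rpow_of_nonpos (by linarith) h4 (by linarith)
    refine this.trans ?_
    rw [div_eq_mul_inv, Real.mul_rpow (by linarith) (by norm_num)]
    have h4t : ((4:ℝ)⁻¹) ^ (-t) ≤ 4 := by
      rw [Real.inv_rpow (by norm_num : (0:ℝ) ≤ 4), ← Real.rpow_neg (by norm_num), neg_neg]
      calc (4:ℝ) ^ t ≤ (4:ℝ) ^ (1:ℝ) :=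
            Real.rpow_le_rpow_of_exponent_le (by norm_num) (le_of_abs_le ht)
        _ = 4 := Real.rpow_one 4
    calc y ^ (-t) * ((4:ℝ)⁻¹) ^ (-t) ≤ y ^ (-t) * 4 :=
          mul_le_mul_of_nonneg_left h4t (Real.rpow_nonneg hy0.le _)
      _ = 4 * y ^ (-t) := by ring
  · -- t < 0 : use x ≤ 4 y
    have : x ^ (-t) ≤ (4 * y) ^ (-t) :=
      Real.rpow_le_rpow hx0.le hxy (by linarith)
    refine this.trans ?_
    rw [Real.mul_rpow (by norm_num) hy0.le]
    have h4t : (4:ℝ) ^ (-t) ≤ 4 := by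
      calc (4:ℝ) ^ (-t) ≤ (4:ℝ) ^ (1:ℝ) :=
            Real.rpow_le_rpow_of_exponent_le (by norm_num)
              (by have := neg_le_of_abs_le ht; linarith)
        _ = 4 := Real.rpow_one 4
    exact mul_le_mul_of_nonneg_right h4t (Real.rpow_nonneg hy0.le _)

/-- Bernoulli step : for `0 < β ≤ 1`, `1 ≤ x` : `(x-1)^β + β x^(β-1) ≤ x^β`. -/
lemma rpow_step {β x : ℝ} (hβ0 : 0 < β) (hβ1 : β ≤ 1) (hx : 1 ≤ x) :
    (x - 1) ^ β + β * x ^ (β - 1) ≤ x ^ β := by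
  have hx0 : (0:ℝ) < x := by linarith
  have hs : (-1:ℝ) ≤ -(1/x) := by
    have : 1/x ≤ 1 := by rw [div_le_one hx0]; exact hx
    linarith
  have hb := rpow_one_add_le_one_add_mul_self hs hβ0.le hβ1
  have h1 : (1:ℝ) + -(1/x) = (x-1)/x := by field_simp; ring
  rw [h1, Real.div_rpow (by linarith) hx0.le] at hb
  have hxb : (0:ℝ) < x ^ β := Real.rpow_pos_of_pos hx0 β
  have key : (x-1)^β ≤ (1 + β * -(1/x)) * x ^ β := (div_le_iff₀ hxb).mp hb
  have h2 : x ^ (β - 1) = x ^ β / x := by rw [Real.rpow_sub hx0, Real.rpow_one]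
  have h3 : (1 + β * -(1/x)) * x ^ β = x ^ β - β * (x ^ β / x) := by
    field_simp; ring
  rw [h3] at key
  rw [h2]
  linarith

lemma oneD {β : ℝ} (hβ0 : 0 < β) (hβ1 : β ≤ 1) (N : ℕ) :
    ∑ i ∈ Finset.range N, ((i:ℝ) + 1) ^ (β - 1) ≤ (N:ℝ) ^ β / β := by
  induction N with
  | zero => simp [Real.zero_rpow hβ0.ne']
  | succ N ih =>
    rw [Finset.sum_range_succ]
    have hstep := rpow_step hβ0 hβ1 (x := (N:ℝ) + 1) (by nlinarith [Nat.cast_nonneg (α := ℝ) N])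
    have hN : ((N:ℝ) + 1) - 1 = (N:ℝ) := by ring
    rw [hN] at hstep
    have hdiv : ((N:ℝ)^β + β * ((N:ℝ)+1)^(β-1)) / β ≤ ((N:ℝ)+1)^β / β :=
      by
      have := mul_le_mul_of_nonneg_right hstep (inv_nonneg.mpr hβ0.le)
      simpa [div_eq_mul_inv] using this
    have heq : ((N:ℝ)^β + β * ((N:ℝ)+1)^(β-1)) / β
        = (N:ℝ)^β/β + ((N:ℝ)+1)^(β-1) := by
      field_simp
    rw [heq] at hdiv
    push_cast
    linarith

/-- The key 2-D lattice sum bound: for `α < 1` there is `C > 0` with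
`∑_{j ∈ t} wt j ^ (-α) ≤ C * W ^ (1-α)` whenever all `j ∈ t` satisfy `wt j ≤ W`. -/
lemma lat {α : ℝ} (hα : α < 1) :
    ∃ C > (0:ℝ), ∀ W : ℝ, 1 ≤ W → ∀ t : Finset (ℤ × ℤ),
      (∀ j ∈ t, wt j ≤ W) → ∑ j ∈ t, (wt j) ^ (-α) ≤ C * W ^ (1 - α) := by
  have hβ0 : (0:ℝ) < 1 - α := by linarith
  refine ⟨9 + (1 + 2/(1-α))^2, by positivity, ?_⟩
  intro W hW t ht
  have hW0 : (0:ℝ) < W := by linarith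
  have hWpow : (0:ℝ) < W ^ (1 - α) := Real.rpow_pos_of_pos hW0 _
  have hsq : Real.sqrt W ^ 2 = W := Real.sq_sqrt hW0.le
  have hsqrt1 : (1:ℝ) ≤ Real.sqrt W := by
    rw [show (1:ℝ) = Real.sqrt 1 from (Real.sqrt_one).symm]
    exact Real.sqrt_le_sqrt hW
  set M : ℤ := ⌊Real.sqrt W⌋ with hM
  have hM1 : (1:ℤ) ≤ M := by
    rw [hM, Int.le_floor]; exact_mod_cast hsqrt1
  have hMle : (M:ℝ) ≤ Real.sqrt W := Int.floor_le _
  -- t is contained in the box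
  have hsub : t ⊆ Finset.Icc (-M) M ×ˢ Finset.Icc (-M) M := by
    intro j hj
    have hwj := ht j hj
    have h1 : ((j.1:ℝ))^2 ≤ W := by
      have := one_le_wt j
      have h2 : (0:ℝ) ≤ (j.2:ℝ)^2 := sq_nonneg _
      unfold wt at hwj; nlinarith
    have h2 : ((j.2:ℝ))^2 ≤ W := by
      have h2 : (0:ℝ) ≤ (j.1:ℝ)^2 := sq_nonneg _
      unfold wt at hwj; nlinarith
    have habs1 : |(j.1:ℝ)| ≤ Real.sqrt W := by
      rw [← Real.sqrt_sq_eq_abs]; exact Real.sqrt_le_sqrt h1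
    have habs2 : |(j.2:ℝ)| ≤ Real.sqrt W := by
      rw [← Real.sqrt_sq_eq_abs]; exact Real.sqrt_le_sqrt h2
    rw [abs_le] at habs1 habs2
    simp only [Finset.mem_product, Finset.mem_Icc]
    constructor
    · constructor
      · rw [neg_le, hM, Int.le_floor]; push_cast; linarith [habs1.1]
      · rw [hM, Int.le_floor]; exact habs1.2
    · constructor
      · rw [neg_le, hM, Int.le_floor]; push_cast; linarith [habs2.1]
      · rw [hM, Int.le_floor]; exact habs2.2
  rcases le_or_gt α 0 with hα0 | hα0
  · -- easy case: α ≤ 0, use counting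
    have hterm : ∀ j ∈ t, wt j ^ (-α) ≤ W ^ (-α) :=
      fun j hj => Real.rpow_le_rpow (wt_pos j).le (ht j hj) (by linarith)
    have hcard : ((t.card : ℝ)) ≤ 9 * W := by
      have h1 : t.card ≤ ((Finset.Icc (-M) M) ×ˢ (Finset.Icc (-M) M)).card :=
        Finset.card_le_card hsub
      rw [Finset.card_product, Int.card_Icc] at h1
      have h2 : (M + 1 - -M).toNat = (2*M+1).toNat := by ring_nf
      rw [h2] at h1
      have h3 : ((2*M+1).toNat : ℤ) = 2*M+1 := Int.toNat_of_nonneg (by omega)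
      have h4 : ((t.card : ℝ)) ≤ (((2*M+1).toNat : ℕ):ℝ) * (((2*M+1).toNat : ℕ):ℝ) := by
        exact_mod_cast h1
      have h5 : (((2*M+1).toNat : ℕ):ℝ) = 2*(M:ℝ)+1 := by
        rw [show (((2*M+1).toNat : ℕ):ℝ) = (((2*M+1).toNat : ℤ):ℝ) by push_cast; ring, h3]
        push_cast; ring
      rw [h5] at h4
      nlinarith [hsqrt1, hMle, hsq, Real.sqrt_nonneg W]
    calc ∑ j ∈ t, (wt j) ^ (-α) ≤ t.card • W ^ (-α) :=
          Finset.sum_le_card_nsmul t _ _ hterm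
      _ = (t.card : ℝ) * W ^ (-α) := by rw [nsmul_eq_mul]
      _ ≤ 9 * W * W ^ (-α) := by
          have : (0:ℝ) ≤ W ^ (-α) := Real.rpow_nonneg hW0.le _
          nlinarith
      _ = 9 * W ^ (1 - α) := by
          rw [show (1:ℝ) - α = 1 + -α by ring, Real.rpow_add hW0, Real.rpow_one]; ring
      _ ≤ (9 + (1 + 2/(1-α))^2) * W ^ (1 - α) := by
          nlinarith [sq_nonneg (1 + 2/(1-α)), hWpow]
  · -- main case: 0 < α < 1
    set β : ℝ := 1 - α with hβ
    set f : ℤ → ℝ := fun n => (1 + (n:ℝ)^2) ^ (-α/2) with hf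
    have hf0 : ∀ n, 0 < f n := fun n => Real.rpow_pos_of_pos (by positivity) _
    have key : ∀ j : ℤ × ℤ, wt j ^ (-α) ≤ f j.1 * f j.2 := by
      intro j
      have hp1 : (0:ℝ) < 1 + (j.1:ℝ)^2 := by positivity
      have hp2 : (0:ℝ) < 1 + (j.2:ℝ)^2 := by positivity
      have hprod : (1 + (j.1:ℝ)^2) * (1 + (j.2:ℝ)^2) ≤ (wt j) ^ (2:ℝ) := by
        rw [Real.rpow_two]
        unfold wt
        nlinarith [sq_nonneg ((j.1:ℝ)), sq_nonneg ((j.2:ℝ)), sq_nonneg ((j.1:ℝ)*(j.2:ℝ))]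
      have h1 : wt j ^ (-α) = ((wt j) ^ (2:ℝ)) ^ (-α/2) := by
        rw [← Real.rpow_mul (wt_pos j).le]; congr 1; ring
      rw [h1, hf]
      calc ((wt j) ^ (2:ℝ)) ^ (-α/2)
          ≤ ((1 + (j.1:ℝ)^2) * (1 + (j.2:ℝ)^2)) ^ (-α/2) :=
            Real.rpow_le_rpow_of_nonpos (by positivity) hprod (by linarith)
        _ = (1 + (j.1:ℝ)^2) ^ (-α/2) * (1 + (j.2:ℝ)^2) ^ (-α/2) :=
            Real.mul_rpow hp1.le hp2.le
    have hstep1 : ∑ j ∈ t, (wt j) ^ (-α)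
        ≤ ∑ j ∈ (Finset.Icc (-M) M) ×ˢ (Finset.Icc (-M) M), f j.1 * f j.2 := by
      refine (Finset.sum_le_sum fun j _ => key j).trans ?_
      exact Finset.sum_le_sum_of_subset_of_nonneg hsub
        (fun j _ _ => (mul_pos (hf0 _) (hf0 _)).le)
    have hstep2 : ∑ j ∈ (Finset.Icc (-M) M) ×ˢ (Finset.Icc (-M) M), f j.1 * f j.2
        = (∑ n ∈ Finset.Icc (-M) M, f n) ^ 2 := by
      rw [Finset.sum_product, sq, Finset.sum_mul_sum]
    -- one-dimensional estimate
    have hsplit : Finset.Icc (-M) M = Finset.Icc (-M) (-1) ∪ Finset.Icc 0 M := by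
      ext n; simp only [Finset.mem_Icc, Finset.mem_union]; omega
    have hdisj : Disjoint (Finset.Icc (-M) (-1)) (Finset.Icc (0:ℤ) M) := by
      rw [Finset.disjoint_left]
      intro n hn hn'
      simp only [Finset.mem_Icc] at hn hn'; omega
    have hneg : ∑ n ∈ Finset.Icc (-M) (-1), f n = ∑ n ∈ Finset.Icc (1:ℤ) M, f n := by
      have himg : Finset.Icc (-M) (-1) = (Finset.Icc (1:ℤ) M).image (fun n => -n) := by
        ext n
        simp only [Finset.mem_Icc, Finset.mem_image]
        constructor
        · intro h; exact ⟨-n, by omega, by omega⟩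
        · rintro ⟨m, hm, rfl⟩; omega
      rw [himg, Finset.sum_image (by intro a _ b _ h; simp only at h; omega)]
      refine Finset.sum_congr rfl fun n _ => ?_
      simp only [hf, Int.cast_neg, neg_sq]
    have hzero : Finset.Icc (0:ℤ) M = insert 0 (Finset.Icc (1:ℤ) M) := by
      ext n; simp only [Finset.mem_Icc, Finset.mem_insert]; omega
    have hf_zero : f 0 = 1 := by
      simp only [hf, Int.cast_zero]
      norm_num
    -- bound the positive part sum
    have hTbound : ∑ n ∈ Finset.Icc (1:ℤ) M, f n ≤ W ^ (β/2) / β := by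
      have h1 : ∀ n ∈ Finset.Icc (1:ℤ) M, f n ≤ ((n:ℝ)) ^ (-α) := by
        intro n hn
        simp only [Finset.mem_Icc] at hn
        have hn1 : (1:ℝ) ≤ (n:ℝ) := by exact_mod_cast hn.1
        have hb : ((n:ℝ)) ^ (2:ℝ) ≤ 1 + (n:ℝ)^2 := by
          rw [Real.rpow_two]; linarith
        have h2 : ((n:ℝ)) ^ (-α) = (((n:ℝ)) ^ (2:ℝ)) ^ (-α/2) := by
          rw [← Real.rpow_mul (by linarith)]; congr 1; ring
        rw [h2, hf]
        exact Real.rpow_le_rpow_of_nonpos (by positivity) hb (by linarith)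
      refine (Finset.sum_le_sum h1).trans ?_
      have himg2 : Finset.Icc (1:ℤ) M = (Finset.range M.toNat).image (fun i : ℕ => (i:ℤ)+1) := by
        ext n
        simp only [Finset.mem_Icc, Finset.mem_image, Finset.mem_range]
        constructor
        · intro h; exact ⟨(n-1).toNat, by omega, by omega⟩
        · rintro ⟨i, hi, rfl⟩; omega
      rw [himg2, Finset.sum_image (by intro a _ b _ h; simp only at h; omega)]
      have hterm : ∑ i ∈ Finset.range M.toNat, (((i:ℕ):ℤ) + 1 : ℝ) ^ (-α)
          = ∑ i ∈ Finset.range M.toNat, ((i:ℝ) + 1) ^ (β - 1) := by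
        refine Finset.sum_congr rfl fun i _ => ?_
        push_cast
        congr 1
        rw [hβ]; ring
      rw [show ∑ x ∈ Finset.range M.toNat, ((((x:ℕ):ℤ) + 1 : ℤ):ℝ) ^ (-α)
          = ∑ i ∈ Finset.range M.toNat, (((i:ℕ):ℤ) + 1 : ℝ) ^ (-α) by push_cast; rfl, hterm]
      refine (oneD hβ0 (by linarith) M.toNat).trans ?_
      have hMcast : ((M.toNat : ℕ):ℝ) = (M:ℝ) := by
        rw [show ((M.toNat : ℕ):ℝ) = (((M.toNat:ℤ)):ℝ) by push_cast; ring,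
          Int.toNat_of_nonneg (by omega)]
      rw [hMcast]
      have h3 : ((M:ℝ)) ^ β ≤ (Real.sqrt W) ^ β :=
        Real.rpow_le_rpow (by positivity) hMle (by linarith)
      have h4 : (Real.sqrt W) ^ β = W ^ (β/2) := by
        rw [Real.sqrt_eq_rpow, ← Real.rpow_mul hW0.le]
        congr 1; ring
      rw [← h4]
      have := mul_le_mul_of_nonneg_right h3 (inv_nonneg.mpr hβ0.le)
      simpa [div_eq_mul_inv] using this
    have hone : (1:ℝ) ≤ W ^ (β/2) := by
      rw [show (1:ℝ) = W ^ (0:ℝ) from (Real.rpow_zero W).symm]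
      exact Real.rpow_le_rpow_of_exponent_le hW (by linarith)
    have hS1 : ∑ n ∈ Finset.Icc (-M) M, f n ≤ (1 + 2/β) * W ^ (β/2) := by
      rw [hsplit, Finset.sum_union hdisj, hneg, hzero,
        Finset.sum_insert (by simp), hf_zero]
      have hh2 : (1 + 2/β) * W ^ (β/2) = W ^ (β/2) + 2*(W ^ (β/2)/β) := by ring
      linarith [hTbound, hone]
    have hS1nonneg : (0:ℝ) ≤ ∑ n ∈ Finset.Icc (-M) M, f n :=
      Finset.sum_nonneg fun n _ => (hf0 n).le
    have hsq2 : (∑ n ∈ Finset.Icc (-M) M, f n) ^ 2 ≤ ((1 + 2/β) * W ^ (β/2)) ^ 2 :=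
      pow_le_pow_left₀ hS1nonneg hS1 2
    have hrw : ((1 + 2/β) * W ^ (β/2)) ^ 2 = (1 + 2/β)^2 * W ^ β := by
      rw [mul_pow]
      congr 1
      rw [← Real.rpow_two, ← Real.rpow_mul hW0.le]; norm_num
    calc ∑ j ∈ t, (wt j) ^ (-α) ≤ (∑ n ∈ Finset.Icc (-M) M, f n) ^ 2 := by
          rw [← hstep2]; exact hstep1
      _ ≤ (1 + 2/β)^2 * W ^ β := by rw [← hrw]; exact hsq2
      _ ≤ (9 + (1 + 2/(1-α))^2) * W ^ (1 - α) := by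
          rw [hβ]
          nlinarith [Real.rpow_pos_of_pos hW0 (1-α)]

/-- shift lemma: summing a nonnegative function supported in `sd` along a shifted
index set is at most its full sum. -/
lemma shift_sum_le {sd : Finset (ℤ × ℤ)} {g : ℤ × ℤ → ℝ}
    (hg0 : ∀ l, 0 ≤ g l) (hgs : ∀ l ∉ sd, g l = 0) (j : ℤ × ℤ) (K : Finset (ℤ × ℤ)) :
    ∑ k ∈ K, g (k - j) ≤ ∑ l ∈ sd, g l := by
  classical
  have himg : ∑ k ∈ K, g (k - j) = ∑ l ∈ K.image (fun k => k - j), g l := by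
    rw [Finset.sum_image]
    intro a _ b _ h
    have h2 : a - j + j = b - j + j := by simp only at h; rw [h]
    simpa using h2
  rw [himg]
  have hfil : ∑ l ∈ (K.image (fun k => k - j)).filter (fun l => l ∈ sd), g l
      = ∑ l ∈ K.image (fun k => k - j), g l := by
    apply Finset.sum_filter_of_ne
    intro l _ hne
    by_contra hl
    exact hne (hgs l hl)
  rw [← hfil]
  apply Finset.sum_le_sum_of_subset_of_nonneg
  · intro l hl
    exact (Finset.mem_filter.mp hl).2
  · intro l _ _
    exact hg0 l

lemma shift_sum_le' {sd : Finset (ℤ × ℤ)} {g : ℤ × ℤ → ℝ}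
    (hg0 : ∀ l, 0 ≤ g l) (hgs : ∀ l ∉ sd, g l = 0) (k : ℤ × ℤ) (u : Finset (ℤ × ℤ)) :
    ∑ j ∈ u, g (k - j) ≤ ∑ l ∈ sd, g l := by
  classical
  have himg : ∑ j ∈ u, g (k - j) = ∑ l ∈ u.image (fun j => k - j), g l := by
    rw [Finset.sum_image]
    intro a _ b _ h
    have h2 : k - (k - a) = k - (k - b) := by simp only at h; rw [h]
    simpa using h2
  rw [himg]
  have hfil : ∑ l ∈ (u.image (fun j => k - j)).filter (fun l => l ∈ sd), g l
      = ∑ l ∈ u.image (fun j => k - j), g l := by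
    apply Finset.sum_filter_of_ne
    intro l _ hne
    by_contra hl
    exact hne (hgs l hl)
  rw [← hfil]
  apply Finset.sum_le_sum_of_subset_of_nonneg
  · intro l hl
    exact (Finset.mem_filter.mp hl).2
  · intro l _ _
    exact hg0 l

lemma three_sq (a b c : ℝ) : (a + (b + c)) ^ 2 ≤ 3 * (a ^ 2 + b ^ 2 + c ^ 2) := by
  nlinarith [sq_nonneg (a - b), sq_nonneg (a - c), sq_nonneg (b - c)]

set_option maxHeartbeats 2000000 in
lemma core (s₁ s₂ : ℝ) (h1 : s₁ < 1) (h2 : s₂ < 1) (h12 : 0 < s₁ + s₂) :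
    ∃ C > (0:ℝ), ∀ (K sc sd : Finset (ℤ × ℤ)) (φ ψ : ℤ × ℤ → ℝ),
      (∀ j, 0 ≤ φ j) → (∀ l, 0 ≤ ψ l) → (∀ l, l ∉ sd → ψ l = 0) →
      ∑ k ∈ K, wt k ^ (s₁ + s₂ - 1) * (∑ j ∈ sc, φ j * ψ (k - j)) ^ 2
        ≤ C * (∑ j ∈ sc, wt j ^ s₁ * (φ j) ^ 2) * (∑ l ∈ sd, wt l ^ s₂ * (ψ l) ^ 2) := by
  classical
  set s : ℝ := s₁ + s₂ with hs
  have hs2 : s₂ = s - s₁ := by rw [hs]; ring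
  have habs1 : |s₁| ≤ 1 := abs_le.mpr ⟨by linarith, by linarith⟩
  have habs2 : |s₂| ≤ 1 := abs_le.mpr ⟨by linarith, by linarith⟩
  obtain ⟨C₁, hC₁0, hC₁⟩ := lat h1
  obtain ⟨C₂, hC₂0, hC₂⟩ := lat h2
  obtain ⟨C₃, hC₃0, hC₃⟩ := lat (show (1:ℝ) - s < 1 by rw [hs]; linarith)
  refine ⟨12 * (C₁ + C₂ + C₃), by linarith, ?_⟩
  intro K sc sd φ ψ hφ0 hψ0 hψs
  -- the three Schur-type bounds
  have schurJ : ∀ (u : Finset (ℤ × ℤ)) (k : ℤ × ℤ),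
      (∀ j ∈ u, wt j ≤ wt (k - j) ∧ wt j ≤ wt k) →
      ∑ j ∈ u, wt j ^ (-s₁) * wt (k - j) ^ (-s₂) ≤ 4 * C₁ * wt k ^ (1 - s) := by
    intro u k hu
    have hterm : ∀ j ∈ u, wt j ^ (-s₁) * wt (k - j) ^ (-s₂)
        ≤ wt j ^ (-s₁) * (4 * wt k ^ (-s₂)) := by
      intro j hj
      obtain ⟨hjl, hjk⟩ := hu j hj
      have hlk : wt (k - j) ≤ 4 * wt k := by
        have := wt_l_le k j; linarith
      have hkl : wt k ≤ 4 * wt (k - j) := by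
        have := wt_k_le k j; linarith
      exact mul_le_mul_of_nonneg_left
        (ratio_rpow (one_le_wt _) (one_le_wt _) hlk hkl habs2)
        (Real.rpow_nonneg (wt_pos j).le _)
    refine (Finset.sum_le_sum hterm).trans ?_
    rw [← Finset.sum_mul]
    have hlat : ∑ j ∈ u, wt j ^ (-s₁) ≤ C₁ * wt k ^ (1 - s₁) :=
      hC₁ (wt k) (one_le_wt k) u (fun j hj => (hu j hj).2)
    have h4 : (0:ℝ) ≤ 4 * wt k ^ (-s₂) := by
      have := Real.rpow_nonneg (wt_pos k).le (-s₂); linarith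
    calc (∑ j ∈ u, wt j ^ (-s₁)) * (4 * wt k ^ (-s₂))
        ≤ (C₁ * wt k ^ (1 - s₁)) * (4 * wt k ^ (-s₂)) :=
          mul_le_mul_of_nonneg_right hlat h4
      _ = 4 * C₁ * (wt k ^ (1 - s₁) * wt k ^ (-s₂)) := by ring
      _ = 4 * C₁ * wt k ^ (1 - s) := by
          rw [← Real.rpow_add (wt_pos k)]
          congr 1
          rw [hs]; ring
  have schurL : ∀ (u : Finset (ℤ × ℤ)) (k : ℤ × ℤ),
      (∀ j ∈ u, wt (k - j) < wt j ∧ wt (k - j) ≤ wt k) →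
      ∑ j ∈ u, wt j ^ (-s₁) * wt (k - j) ^ (-s₂) ≤ 4 * C₂ * wt k ^ (1 - s) := by
    intro u k hu
    have hterm : ∀ j ∈ u, wt j ^ (-s₁) * wt (k - j) ^ (-s₂)
        ≤ (4 * wt k ^ (-s₁)) * wt (k - j) ^ (-s₂) := by
      intro j hj
      obtain ⟨hlj, hlk⟩ := hu j hj
      have hjk : wt j ≤ 4 * wt k := by
        have := wt_j_le k j; linarith
      have hkj : wt k ≤ 4 * wt j := by
        have := wt_k_le k j; linarith
      exact mul_le_mul_of_nonneg_right
        (ratio_rpow (one_le_wt _) (one_le_wt _) hjk hkj habs1)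
        (Real.rpow_nonneg (wt_pos _).le _)
    refine (Finset.sum_le_sum hterm).trans ?_
    rw [← Finset.mul_sum]
    have himg : ∑ j ∈ u, wt (k - j) ^ (-s₂)
        = ∑ l ∈ u.image (fun j => k - j), wt l ^ (-s₂) := by
      rw [Finset.sum_image]
      intro a _ b _ h
      have h2 : k - (k - a) = k - (k - b) := by simp only at h; rw [h]
      simpa using h2
    have hlat : ∑ l ∈ u.image (fun j => k - j), wt l ^ (-s₂) ≤ C₂ * wt k ^ (1 - s₂) := by
      apply hC₂ (wt k) (one_le_wt k)
      intro l hl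
      obtain ⟨j, hj, rfl⟩ := Finset.mem_image.mp hl
      exact (hu j hj).2
    rw [himg]
    have h4 : (0:ℝ) ≤ 4 * wt k ^ (-s₁) := by
      have := Real.rpow_nonneg (wt_pos k).le (-s₁); linarith
    calc (4 * wt k ^ (-s₁)) * (∑ l ∈ u.image (fun j => k - j), wt l ^ (-s₂))
        ≤ (4 * wt k ^ (-s₁)) * (C₂ * wt k ^ (1 - s₂)) :=
          mul_le_mul_of_nonneg_left hlat h4
      _ = 4 * C₂ * (wt k ^ (-s₁) * wt k ^ (1 - s₂)) := by ring
      _ = 4 * C₂ * wt k ^ (1 - s) := by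
          rw [← Real.rpow_add (wt_pos k)]
          congr 1
          rw [hs]; ring
  have schurK : ∀ (v : Finset (ℤ × ℤ)) (l : ℤ × ℤ),
      (∀ k ∈ v, wt k ≤ wt l) →
      ∑ k ∈ v, wt k ^ (s - 1) ≤ C₃ * wt l ^ s := by
    intro v l hv
    have hrw : ∑ k ∈ v, wt k ^ (s - 1) = ∑ k ∈ v, wt k ^ (-(1 - s)) := by
      refine Finset.sum_congr rfl fun k _ => ?_
      congr 1; ring
    rw [hrw]
    have := hC₃ (wt l) (one_le_wt l) v hv
    refine this.trans ?_
    have : (1:ℝ) - (1 - s) = s := by ring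
    rw [this]
  -- weighted norms
  set X := ∑ j ∈ sc, wt j ^ s₁ * (φ j) ^ 2 with hX
  set Y := ∑ l ∈ sd, wt l ^ s₂ * (ψ l) ^ 2 with hY
  have hX0 : 0 ≤ X :=
    Finset.sum_nonneg fun j _ => mul_nonneg (Real.rpow_nonneg (wt_pos j).le _) (sq_nonneg _)
  have hY0 : 0 ≤ Y :=
    Finset.sum_nonneg fun l _ => mul_nonneg (Real.rpow_nonneg (wt_pos l).le _) (sq_nonneg _)
  set Q : ℤ × ℤ → ℝ := fun k =>
    ∑ j ∈ sc, (wt j ^ s₁ * (φ j) ^ 2) * (wt (k - j) ^ s₂ * (ψ (k - j)) ^ 2) with hQdef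
  have hg0 : ∀ l, 0 ≤ wt l ^ s₂ * (ψ l) ^ 2 :=
    fun l => mul_nonneg (Real.rpow_nonneg (wt_pos l).le _) (sq_nonneg _)
  have hgs : ∀ l ∉ sd, wt l ^ s₂ * (ψ l) ^ 2 = 0 := by
    intro l hl; rw [hψs l hl]; ring
  have hQ0 : ∀ k, 0 ≤ Q k := fun k =>
    Finset.sum_nonneg fun j _ => mul_nonneg
      (mul_nonneg (Real.rpow_nonneg (wt_pos j).le _) (sq_nonneg _))
      (mul_nonneg (Real.rpow_nonneg (wt_pos _).le _) (sq_nonneg _))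
  have hQsum : ∑ k ∈ K, Q k ≤ X * Y := by
    rw [hQdef]
    rw [Finset.sum_comm]
    calc ∑ j ∈ sc, ∑ k ∈ K, (wt j ^ s₁ * (φ j) ^ 2) * (wt (k - j) ^ s₂ * (ψ (k - j)) ^ 2)
        = ∑ j ∈ sc, (wt j ^ s₁ * (φ j) ^ 2) * ∑ k ∈ K, wt (k - j) ^ s₂ * (ψ (k - j)) ^ 2 := by
          refine Finset.sum_congr rfl fun j _ => ?_
          rw [Finset.mul_sum]
      _ ≤ ∑ j ∈ sc, (wt j ^ s₁ * (φ j) ^ 2) * Y := by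
          refine Finset.sum_le_sum fun j _ => ?_
          exact mul_le_mul_of_nonneg_left (shift_sum_le hg0 hgs j K)
            (mul_nonneg (Real.rpow_nonneg (wt_pos j).le _) (sq_nonneg _))
      _ = X * Y := by rw [hX, Finset.sum_mul]
  -- region predicates
  set p : ℤ × ℤ → ℤ × ℤ → Prop := fun k j => wt j ≤ wt (k - j) ∧ wt j ≤ wt k with hpdef
  set q : ℤ × ℤ → ℤ × ℤ → Prop := fun k j => wt (k - j) < wt j ∧ wt (k - j) ≤ wt k with hqdef
  set T3 : ℤ × ℤ → ℝ := fun k => wt k ^ (s - 1) *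
    (∑ j ∈ (sc.filter (fun j => ¬ p k j)).filter (fun j => ¬ q k j), φ j * ψ (k - j)) ^ 2
    with hT3def
  have hwk0 : ∀ k : ℤ × ℤ, (0:ℝ) ≤ wt k ^ (s - 1) :=
    fun k => Real.rpow_nonneg (wt_pos k).le _
  have hP0 : ∀ (k j : ℤ × ℤ), 0 ≤ φ j * ψ (k - j) :=
    fun k j => mul_nonneg (hφ0 j) (hψ0 _)
  -- the per-k splitting
  have key : ∀ k ∈ K, wt k ^ (s - 1) * (∑ j ∈ sc, φ j * ψ (k - j)) ^ 2
      ≤ 3 * (4 * C₁ * Q k + 4 * C₂ * Q k + T3 k) := by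
    intro k _
    set A := sc.filter (p k) with hA
    set R := sc.filter (fun j => ¬ p k j) with hR
    set B := R.filter (q k) with hB
    set Cc := R.filter (fun j => ¬ q k j) with hCc
    have t1 : ∑ j ∈ A, φ j * ψ (k - j) + ∑ j ∈ R, φ j * ψ (k - j)
        = ∑ j ∈ sc, φ j * ψ (k - j) :=
      Finset.sum_filter_add_sum_filter_not sc (p k) _
    have t2 : ∑ j ∈ B, φ j * ψ (k - j) + ∑ j ∈ Cc, φ j * ψ (k - j)
        = ∑ j ∈ R, φ j * ψ (k - j) :=
      Finset.sum_filter_add_sum_filter_not R (q k) _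
    have hsplit : ∑ j ∈ sc, φ j * ψ (k - j)
        = ∑ j ∈ A, φ j * ψ (k - j) + (∑ j ∈ B, φ j * ψ (k - j) + ∑ j ∈ Cc, φ j * ψ (k - j)) := by
      rw [← t1, ← t2]
    -- Cauchy-Schwarz for region A
    have hACS : (∑ j ∈ A, φ j * ψ (k - j)) ^ 2 ≤ (4 * C₁ * wt k ^ (1 - s)) * Q k := by
      have hfg : ∀ j : ℤ × ℤ,
          Real.sqrt (wt j ^ (-s₁) * wt (k - j) ^ (-s₂)) *
            (Real.sqrt (wt j ^ s₁ * wt (k - j) ^ s₂) * (φ j * ψ (k - j)))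
          = φ j * ψ (k - j) := by
        intro j
        have hxy : (wt j ^ (-s₁) * wt (k - j) ^ (-s₂)) * (wt j ^ s₁ * wt (k - j) ^ s₂) = 1 := by
          have ha : wt j ^ s₁ ≠ 0 := (Real.rpow_pos_of_pos (wt_pos j) _).ne'
          have hb : wt (k - j) ^ s₂ ≠ 0 := (Real.rpow_pos_of_pos (wt_pos _) _).ne'
          rw [Real.rpow_neg (wt_pos j).le, Real.rpow_neg (wt_pos _).le]
          field_simp
        rw [← mul_assoc, ← Real.sqrt_mul
          (mul_nonneg (Real.rpow_nonneg (wt_pos j).le _) (Real.rpow_nonneg (wt_pos _).le _)),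
          hxy, Real.sqrt_one, one_mul]
      have hCS := Finset.sum_mul_sq_le_sq_mul_sq A
        (fun j => Real.sqrt (wt j ^ (-s₁) * wt (k - j) ^ (-s₂)))
        (fun j => Real.sqrt (wt j ^ s₁ * wt (k - j) ^ s₂) * (φ j * ψ (k - j)))
      rw [Finset.sum_congr rfl (fun j _ => hfg j)] at hCS
      have hf2 : ∑ j ∈ A, (Real.sqrt (wt j ^ (-s₁) * wt (k - j) ^ (-s₂))) ^ 2
          = ∑ j ∈ A, wt j ^ (-s₁) * wt (k - j) ^ (-s₂) := by
        refine Finset.sum_congr rfl fun j _ => Real.sq_sqrt ?_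
        exact mul_nonneg (Real.rpow_nonneg (wt_pos j).le _) (Real.rpow_nonneg (wt_pos _).le _)
      have hg2 : ∑ j ∈ A, (Real.sqrt (wt j ^ s₁ * wt (k - j) ^ s₂) * (φ j * ψ (k - j))) ^ 2
          = ∑ j ∈ A, (wt j ^ s₁ * wt (k - j) ^ s₂) * (φ j * ψ (k - j)) ^ 2 := by
        refine Finset.sum_congr rfl fun j _ => ?_
        rw [mul_pow, Real.sq_sqrt
          (mul_nonneg (Real.rpow_nonneg (wt_pos j).le _) (Real.rpow_nonneg (wt_pos _).le _))]
      rw [hf2, hg2] at hCS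
      have hbound1 : ∑ j ∈ A, wt j ^ (-s₁) * wt (k - j) ^ (-s₂) ≤ 4 * C₁ * wt k ^ (1 - s) := by
        apply schurJ A k
        intro j hj
        exact (Finset.mem_filter.mp hj).2
      have hbound2 : ∑ j ∈ A, (wt j ^ s₁ * wt (k - j) ^ s₂) * (φ j * ψ (k - j)) ^ 2 ≤ Q k := by
        rw [hQdef]
        refine (Finset.sum_le_sum_of_subset_of_nonneg (Finset.filter_subset _ _) ?_).trans_eq ?_
        · intro j _ _
          exact mul_nonneg
            (mul_nonneg (Real.rpow_nonneg (wt_pos j).le _) (Real.rpow_nonneg (wt_pos _).le _))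
            (sq_nonneg _)
        · refine Finset.sum_congr rfl fun j _ => ?_
          ring
      refine hCS.trans ?_
      have hsum1nn : (0:ℝ) ≤ ∑ j ∈ A, wt j ^ (-s₁) * wt (k - j) ^ (-s₂) :=
        Finset.sum_nonneg fun j _ =>
          mul_nonneg (Real.rpow_nonneg (wt_pos j).le _) (Real.rpow_nonneg (wt_pos _).le _)
      exact mul_le_mul hbound1 hbound2
        (Finset.sum_nonneg fun j _ => mul_nonneg
          (mul_nonneg (Real.rpow_nonneg (wt_pos j).le _) (Real.rpow_nonneg (wt_pos _).le _))
          (sq_nonneg _))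
        (by have h := Real.rpow_nonneg (wt_pos k).le (1 - s); nlinarith [hC₁0, h])
    -- Cauchy-Schwarz for region B
    have hBCS : (∑ j ∈ B, φ j * ψ (k - j)) ^ 2 ≤ (4 * C₂ * wt k ^ (1 - s)) * Q k := by
      have hfg : ∀ j : ℤ × ℤ,
          Real.sqrt (wt j ^ (-s₁) * wt (k - j) ^ (-s₂)) *
            (Real.sqrt (wt j ^ s₁ * wt (k - j) ^ s₂) * (φ j * ψ (k - j)))
          = φ j * ψ (k - j) := by
        intro j
        have hxy : (wt j ^ (-s₁) * wt (k - j) ^ (-s₂)) * (wt j ^ s₁ * wt (k - j) ^ s₂) = 1 := by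
          have ha : wt j ^ s₁ ≠ 0 := (Real.rpow_pos_of_pos (wt_pos j) _).ne'
          have hb : wt (k - j) ^ s₂ ≠ 0 := (Real.rpow_pos_of_pos (wt_pos _) _).ne'
          rw [Real.rpow_neg (wt_pos j).le, Real.rpow_neg (wt_pos _).le]
          field_simp
        rw [← mul_assoc, ← Real.sqrt_mul
          (mul_nonneg (Real.rpow_nonneg (wt_pos j).le _) (Real.rpow_nonneg (wt_pos _).le _)),
          hxy, Real.sqrt_one, one_mul]
      have hCS := Finset.sum_mul_sq_le_sq_mul_sq B
        (fun j => Real.sqrt (wt j ^ (-s₁) * wt (k - j) ^ (-s₂)))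
        (fun j => Real.sqrt (wt j ^ s₁ * wt (k - j) ^ s₂) * (φ j * ψ (k - j)))
      rw [Finset.sum_congr rfl (fun j _ => hfg j)] at hCS
      have hf2 : ∑ j ∈ B, (Real.sqrt (wt j ^ (-s₁) * wt (k - j) ^ (-s₂))) ^ 2
          = ∑ j ∈ B, wt j ^ (-s₁) * wt (k - j) ^ (-s₂) := by
        refine Finset.sum_congr rfl fun j _ => Real.sq_sqrt ?_
        exact mul_nonneg (Real.rpow_nonneg (wt_pos j).le _) (Real.rpow_nonneg (wt_pos _).le _)
      have hg2 : ∑ j ∈ B, (Real.sqrt (wt j ^ s₁ * wt (k - j) ^ s₂) * (φ j * ψ (k - j))) ^ 2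
          = ∑ j ∈ B, (wt j ^ s₁ * wt (k - j) ^ s₂) * (φ j * ψ (k - j)) ^ 2 := by
        refine Finset.sum_congr rfl fun j _ => ?_
        rw [mul_pow, Real.sq_sqrt
          (mul_nonneg (Real.rpow_nonneg (wt_pos j).le _) (Real.rpow_nonneg (wt_pos _).le _))]
      rw [hf2, hg2] at hCS
      have hbound1 : ∑ j ∈ B, wt j ^ (-s₁) * wt (k - j) ^ (-s₂) ≤ 4 * C₂ * wt k ^ (1 - s) := by
        apply schurL B k
        intro j hj
        exact (Finset.mem_filter.mp hj).2
      have hbound2 : ∑ j ∈ B, (wt j ^ s₁ * wt (k - j) ^ s₂) * (φ j * ψ (k - j)) ^ 2 ≤ Q k := by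
        rw [hQdef]
        have hBsub : B ⊆ sc := (Finset.filter_subset _ _).trans (Finset.filter_subset _ _)
        refine (Finset.sum_le_sum_of_subset_of_nonneg hBsub ?_).trans_eq ?_
        · intro j _ _
          exact mul_nonneg
            (mul_nonneg (Real.rpow_nonneg (wt_pos j).le _) (Real.rpow_nonneg (wt_pos _).le _))
            (sq_nonneg _)
        · refine Finset.sum_congr rfl fun j _ => ?_
          ring
      refine hCS.trans ?_
      exact mul_le_mul hbound1 hbound2
        (Finset.sum_nonneg fun j _ => mul_nonneg
          (mul_nonneg (Real.rpow_nonneg (wt_pos j).le _) (Real.rpow_nonneg (wt_pos _).le _))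
          (sq_nonneg _))
        (by have h := Real.rpow_nonneg (wt_pos k).le (1 - s); nlinarith [hC₂0, h])
    -- assemble the per-k bound
    have hwk1 : wt k ^ (s - 1) * wt k ^ (1 - s) = 1 := by
      rw [← Real.rpow_add (wt_pos k)]
      norm_num
    rw [hsplit]
    calc wt k ^ (s - 1) * (∑ j ∈ A, φ j * ψ (k - j)
          + (∑ j ∈ B, φ j * ψ (k - j) + ∑ j ∈ Cc, φ j * ψ (k - j))) ^ 2
        ≤ wt k ^ (s - 1) * (3 * ((∑ j ∈ A, φ j * ψ (k - j)) ^ 2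
            + (∑ j ∈ B, φ j * ψ (k - j)) ^ 2 + (∑ j ∈ Cc, φ j * ψ (k - j)) ^ 2)) :=
          mul_le_mul_of_nonneg_left (three_sq _ _ _) (hwk0 k)
      _ ≤ 3 * (4 * C₁ * Q k + 4 * C₂ * Q k + T3 k) := by
          have e1 : wt k ^ (s - 1) * ((∑ j ∈ A, φ j * ψ (k - j)) ^ 2)
              ≤ 4 * C₁ * Q k := by
            calc wt k ^ (s - 1) * ((∑ j ∈ A, φ j * ψ (k - j)) ^ 2)
                ≤ wt k ^ (s - 1) * ((4 * C₁ * wt k ^ (1 - s)) * Q k) :=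
                  mul_le_mul_of_nonneg_left hACS (hwk0 k)
              _ = (wt k ^ (s - 1) * wt k ^ (1 - s)) * (4 * C₁ * Q k) := by ring
              _ = 4 * C₁ * Q k := by rw [hwk1, one_mul]
          have e2 : wt k ^ (s - 1) * ((∑ j ∈ B, φ j * ψ (k - j)) ^ 2)
              ≤ 4 * C₂ * Q k := by
            calc wt k ^ (s - 1) * ((∑ j ∈ B, φ j * ψ (k - j)) ^ 2)
                ≤ wt k ^ (s - 1) * ((4 * C₂ * wt k ^ (1 - s)) * Q k) :=
                  mul_le_mul_of_nonneg_left hBCS (hwk0 k)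
              _ = (wt k ^ (s - 1) * wt k ^ (1 - s)) * (4 * C₂ * Q k) := by ring
              _ = 4 * C₂ * Q k := by rw [hwk1, one_mul]
          have e3 : wt k ^ (s - 1) * ((∑ j ∈ Cc, φ j * ψ (k - j)) ^ 2) = T3 k := rfl
          linarith [e1, e2, e3]
  -- the K-region (high-high interaction) sum bound
  set t : ℤ × ℤ → ℤ × ℤ → ℝ := fun k l =>
    if wt k < wt l then 4 * (wt k ^ (s - 1) * wt l ^ (-s₁)) * (ψ l) ^ 2 else 0 with htdef
  have ht0 : ∀ k l, 0 ≤ t k l := by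
    intro k l
    rw [htdef]
    dsimp only
    split
    · have h1 := Real.rpow_nonneg (wt_pos k).le (s - 1)
      have h2 := Real.rpow_nonneg (wt_pos l).le (-s₁)
      have h3 := sq_nonneg (ψ l)
      nlinarith [mul_nonneg (mul_nonneg h1 h2) h3]
    · exact le_refl 0
  have hts : ∀ k, ∀ l ∉ sd, t k l = 0 := by
    intro k l hl
    rw [htdef]
    dsimp only
    rw [hψs l hl]
    split <;> ring
  have hT3sum : ∑ k ∈ K, T3 k ≤ 4 * C₃ * (X * Y) := by
    have hper : ∀ k ∈ K, T3 k ≤ X * ∑ l ∈ sd, t k l := by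
      intro k _
      set Cck := (sc.filter (fun j => ¬ p k j)).filter (fun j => ¬ q k j) with hCck
      have hT3k : T3 k = wt k ^ (s - 1) * (∑ j ∈ Cck, φ j * ψ (k - j)) ^ 2 := by
        rw [hT3def]
      -- Cauchy-Schwarz
      have hfg : ∀ j : ℤ × ℤ,
          (Real.sqrt (wt j ^ s₁) * φ j) * (Real.sqrt (wt j ^ (-s₁)) * ψ (k - j))
            = φ j * ψ (k - j) := by
        intro j
        have hxy : wt j ^ s₁ * wt j ^ (-s₁) = 1 := by
          rw [← Real.rpow_add (wt_pos j)]
          norm_num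
        calc (Real.sqrt (wt j ^ s₁) * φ j) * (Real.sqrt (wt j ^ (-s₁)) * ψ (k - j))
            = (Real.sqrt (wt j ^ s₁) * Real.sqrt (wt j ^ (-s₁))) * (φ j * ψ (k - j)) := by ring
          _ = Real.sqrt (wt j ^ s₁ * wt j ^ (-s₁)) * (φ j * ψ (k - j)) := by
              rw [← Real.sqrt_mul (Real.rpow_nonneg (wt_pos j).le _)]
          _ = φ j * ψ (k - j) := by rw [hxy, Real.sqrt_one, one_mul]
      have hCS := Finset.sum_mul_sq_le_sq_mul_sq Cck
        (fun j => Real.sqrt (wt j ^ s₁) * φ j)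
        (fun j => Real.sqrt (wt j ^ (-s₁)) * ψ (k - j))
      rw [Finset.sum_congr rfl (fun j _ => hfg j)] at hCS
      have hf2 : ∑ j ∈ Cck, (Real.sqrt (wt j ^ s₁) * φ j) ^ 2
          = ∑ j ∈ Cck, wt j ^ s₁ * (φ j) ^ 2 := by
        refine Finset.sum_congr rfl fun j _ => ?_
        rw [mul_pow, Real.sq_sqrt (Real.rpow_nonneg (wt_pos j).le _)]
      have hg2 : ∑ j ∈ Cck, (Real.sqrt (wt j ^ (-s₁)) * ψ (k - j)) ^ 2
          = ∑ j ∈ Cck, wt j ^ (-s₁) * (ψ (k - j)) ^ 2 := by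
        refine Finset.sum_congr rfl fun j _ => ?_
        rw [mul_pow, Real.sq_sqrt (Real.rpow_nonneg (wt_pos j).le _)]
      rw [hf2, hg2] at hCS
      have hXb : ∑ j ∈ Cck, wt j ^ s₁ * (φ j) ^ 2 ≤ X := by
        rw [hX]
        refine Finset.sum_le_sum_of_subset_of_nonneg ?_ ?_
        · exact (Finset.filter_subset _ _).trans (Finset.filter_subset _ _)
        · intro j _ _
          exact mul_nonneg (Real.rpow_nonneg (wt_pos j).le _) (sq_nonneg _)
      have hg2nn : (0:ℝ) ≤ ∑ j ∈ Cck, wt j ^ (-s₁) * (ψ (k - j)) ^ 2 :=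
        Finset.sum_nonneg fun j _ =>
          mul_nonneg (Real.rpow_nonneg (wt_pos j).le _) (sq_nonneg _)
      have hCS2 : (∑ j ∈ Cck, φ j * ψ (k - j)) ^ 2
          ≤ X * ∑ j ∈ Cck, wt j ^ (-s₁) * (ψ (k - j)) ^ 2 :=
        hCS.trans (mul_le_mul_of_nonneg_right hXb hg2nn)
      -- per-term domination by t
      have hdom : ∀ j ∈ Cck, wt k ^ (s - 1) * (wt j ^ (-s₁) * (ψ (k - j)) ^ 2)
          ≤ t k (k - j) := by
        intro j hj
        have hm := Finset.mem_filter.mp hj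
        have hnq : ¬ q k j := hm.2
        have hnp : ¬ p k j := (Finset.mem_filter.mp hm.1).2
        rw [hpdef] at hnp
        rw [hqdef] at hnq
        dsimp only at hnp hnq
        have hkj : wt k < wt j ∧ wt k < wt (k - j) := by
          rcases le_or_gt (wt j) (wt (k - j)) with h | h
          · have h' : ¬ wt j ≤ wt k := fun hc => hnp ⟨h, hc⟩
            exact ⟨not_le.mp h', lt_of_lt_of_le (not_le.mp h') h⟩
          · have h' : ¬ wt (k - j) ≤ wt k := fun hc => hnq ⟨h, hc⟩
            exact ⟨(not_le.mp h').trans h, not_le.mp h'⟩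
        have hratio : wt j ^ (-s₁) ≤ 4 * wt (k - j) ^ (-s₁) := by
          apply ratio_rpow (one_le_wt j) (one_le_wt (k - j)) ?_ ?_ habs1
          · have := wt_j_le k j; linarith [hkj.2]
          · have := wt_l_le k j; linarith [hkj.1]
        have htval : t k (k - j)
            = 4 * (wt k ^ (s - 1) * wt (k - j) ^ (-s₁)) * (ψ (k - j)) ^ 2 := by
          rw [htdef]
          dsimp only
          rw [if_pos hkj.2]
        rw [htval]
        have step : wt j ^ (-s₁) * (ψ (k - j)) ^ 2
            ≤ (4 * wt (k - j) ^ (-s₁)) * (ψ (k - j)) ^ 2 :=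
          mul_le_mul_of_nonneg_right hratio (sq_nonneg _)
        calc wt k ^ (s - 1) * (wt j ^ (-s₁) * (ψ (k - j)) ^ 2)
            ≤ wt k ^ (s - 1) * ((4 * wt (k - j) ^ (-s₁)) * (ψ (k - j)) ^ 2) :=
              mul_le_mul_of_nonneg_left step (hwk0 k)
          _ = 4 * (wt k ^ (s - 1) * wt (k - j) ^ (-s₁)) * (ψ (k - j)) ^ 2 := by ring
      have hchain : wt k ^ (s - 1) * ∑ j ∈ Cck, wt j ^ (-s₁) * (ψ (k - j)) ^ 2
          ≤ ∑ l ∈ sd, t k l := by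
        rw [Finset.mul_sum]
        refine (Finset.sum_le_sum hdom).trans ?_
        have hsub : ∑ j ∈ Cck, t k (k - j) ≤ ∑ j ∈ sc, t k (k - j) := by
          apply Finset.sum_le_sum_of_subset_of_nonneg
          · rw [hCck]
            exact (Finset.filter_subset _ _).trans (Finset.filter_subset _ _)
          · exact fun j _ _ => ht0 k (k - j)
        exact hsub.trans (shift_sum_le' (ht0 k) (hts k) k sc)
      calc T3 k = wt k ^ (s - 1) * (∑ j ∈ Cck, φ j * ψ (k - j)) ^ 2 := hT3k
        _ ≤ wt k ^ (s - 1) * (X * ∑ j ∈ Cck, wt j ^ (-s₁) * (ψ (k - j)) ^ 2) :=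
            mul_le_mul_of_nonneg_left hCS2 (hwk0 k)
        _ = X * (wt k ^ (s - 1) * ∑ j ∈ Cck, wt j ^ (-s₁) * (ψ (k - j)) ^ 2) := by ring
        _ ≤ X * ∑ l ∈ sd, t k l := mul_le_mul_of_nonneg_left hchain hX0
    have hinner : ∑ l ∈ sd, ∑ k ∈ K, t k l ≤ 4 * C₃ * Y := by
      have hl : ∀ l ∈ sd, ∑ k ∈ K, t k l ≤ 4 * C₃ * (wt l ^ s₂ * (ψ l) ^ 2) := by
        intro l _
        have hfilter : ∑ k ∈ K, t k l
            = ∑ k ∈ K.filter (fun k => wt k < wt l),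
                4 * (wt k ^ (s - 1) * wt l ^ (-s₁)) * (ψ l) ^ 2 := by
          rw [Finset.sum_filter]
        rw [hfilter]
        have hre : ∑ k ∈ K.filter (fun k => wt k < wt l),
              4 * (wt k ^ (s - 1) * wt l ^ (-s₁)) * (ψ l) ^ 2
            = (4 * wt l ^ (-s₁) * (ψ l) ^ 2) *
              ∑ k ∈ K.filter (fun k => wt k < wt l), wt k ^ (s - 1) := by
          rw [Finset.mul_sum]
          refine Finset.sum_congr rfl fun k _ => by ring
        rw [hre]
        have hsch : ∑ k ∈ K.filter (fun k => wt k < wt l), wt k ^ (s - 1) ≤ C₃ * wt l ^ s := by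
          apply schurK
          intro k hk
          exact (Finset.mem_filter.mp hk).2.le
        have hnn : (0:ℝ) ≤ 4 * wt l ^ (-s₁) * (ψ l) ^ 2 := by
          have := Real.rpow_nonneg (wt_pos l).le (-s₁)
          have := sq_nonneg (ψ l)
          positivity
        calc (4 * wt l ^ (-s₁) * (ψ l) ^ 2) *
              ∑ k ∈ K.filter (fun k => wt k < wt l), wt k ^ (s - 1)
            ≤ (4 * wt l ^ (-s₁) * (ψ l) ^ 2) * (C₃ * wt l ^ s) :=
              mul_le_mul_of_nonneg_left hsch hnn
          _ = 4 * C₃ * ((wt l ^ (-s₁) * wt l ^ s) * (ψ l) ^ 2) := by ring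
          _ = 4 * C₃ * (wt l ^ s₂ * (ψ l) ^ 2) := by
              rw [← Real.rpow_add (wt_pos l)]
              congr 2
              rw [hs]; ring
      calc ∑ l ∈ sd, ∑ k ∈ K, t k l
          ≤ ∑ l ∈ sd, 4 * C₃ * (wt l ^ s₂ * (ψ l) ^ 2) := Finset.sum_le_sum hl
        _ = 4 * C₃ * Y := by rw [hY, Finset.mul_sum]
    calc ∑ k ∈ K, T3 k ≤ ∑ k ∈ K, X * ∑ l ∈ sd, t k l := Finset.sum_le_sum hper
      _ = X * ∑ k ∈ K, ∑ l ∈ sd, t k l := by rw [Finset.mul_sum]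
      _ = X * ∑ l ∈ sd, ∑ k ∈ K, t k l := by rw [Finset.sum_comm]
      _ ≤ X * (4 * C₃ * Y) := mul_le_mul_of_nonneg_left hinner hX0
      _ = 4 * C₃ * (X * Y) := by ring
  -- final assembly
  calc ∑ k ∈ K, wt k ^ (s - 1) * (∑ j ∈ sc, φ j * ψ (k - j)) ^ 2
      ≤ ∑ k ∈ K, 3 * (4 * C₁ * Q k + 4 * C₂ * Q k + T3 k) := Finset.sum_le_sum key
    _ = 12 * C₁ * ∑ k ∈ K, Q k + 12 * C₂ * ∑ k ∈ K, Q k + 3 * ∑ k ∈ K, T3 k := by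
        rw [Finset.mul_sum, Finset.mul_sum, Finset.mul_sum,
          ← Finset.sum_add_distrib, ← Finset.sum_add_distrib]
        refine Finset.sum_congr rfl fun k _ => by ring
    _ ≤ 12 * C₁ * (X * Y) + 12 * C₂ * (X * Y) + 3 * (4 * C₃ * (X * Y)) := by
        have m1 : 12 * C₁ * ∑ k ∈ K, Q k ≤ 12 * C₁ * (X * Y) :=
          mul_le_mul_of_nonneg_left hQsum (by linarith)
        have m2 : 12 * C₂ * ∑ k ∈ K, Q k ≤ 12 * C₂ * (X * Y) :=
          mul_le_mul_of_nonneg_left hQsum (by linarith)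
        linarith [hT3sum]
    _ = 12 * (C₁ + C₂ + C₃) * X * Y := by ring

set_option maxHeartbeats 1000000 in
/-- (Fourier side of the 2D Sobolev product estimate.)
For `s₁, s₂ < 1` with `s₁ + s₂ > 0` there is `C > 0` such that for all finitely
supported `c, d : ℤ² → ℂ`, with `(c⋆d)(k) = ∑_j c(j) d(k−j)`,
`∑_k (1+|k|²)^{s₁+s₂−1} |(c⋆d)(k)|² ≤ C (∑_k (1+|k|²)^{s₁} |c(k)|²) (∑_k (1+|k|²)^{s₂} |d(k)|²)`. -/
theorem stmt_7 (s₁ s₂ : ℝ) (h1 : s₁ < 1) (h2 : s₂ < 1) (h12 : 0 < s₁ + s₂) :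
    ∃ C > (0 : ℝ), ∀ c d : ℤ × ℤ → ℂ,
      (Function.support c).Finite → (Function.support d).Finite →
      ∑' k : ℤ × ℤ, (1 + (k.1 : ℝ) ^ 2 + (k.2 : ℝ) ^ 2) ^ (s₁ + s₂ - 1) *
          ‖∑' j : ℤ × ℤ, c j * d (k - j)‖ ^ 2
        ≤ C * (∑' k : ℤ × ℤ, (1 + (k.1 : ℝ) ^ 2 + (k.2 : ℝ) ^ 2) ^ s₁ * ‖c k‖ ^ 2) *
            (∑' k : ℤ × ℤ, (1 + (k.1 : ℝ) ^ 2 + (k.2 : ℝ) ^ 2) ^ s₂ * ‖d k‖ ^ 2) := by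
  classical
  obtain ⟨C, hC0, hcore⟩ := core s₁ s₂ h1 h2 h12
  refine ⟨C, hC0, ?_⟩
  intro c d hc hd
  set sc := hc.toFinset with hsc
  set sd := hd.toFinset with hsd
  set K := sc + sd with hK
  have hcs : ∀ j, j ∉ sc → c j = 0 := by
    intro j hj
    by_contra h
    exact hj (hc.mem_toFinset.mpr h)
  have hds : ∀ l, l ∉ sd → d l = 0 := by
    intro l hl
    by_contra h
    exact hl (hd.mem_toFinset.mpr h)
  have hF : ∀ k : ℤ × ℤ, (∑' j : ℤ × ℤ, c j * d (k - j)) = ∑ j ∈ sc, c j * d (k - j) := by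
    intro k
    apply tsum_eq_sum
    intro j hj
    rw [hcs j hj, zero_mul]
  have hKz : ∀ k : ℤ × ℤ, k ∉ K →
      (1 + (k.1 : ℝ) ^ 2 + (k.2 : ℝ) ^ 2) ^ (s₁ + s₂ - 1) *
        ‖∑' j : ℤ × ℤ, c j * d (k - j)‖ ^ 2 = 0 := by
    intro k hk
    have hz : ∀ j : ℤ × ℤ, c j * d (k - j) = 0 := by
      intro j
      by_cases hcj : c j = 0
      · rw [hcj, zero_mul]
      by_cases hdj : d (k - j) = 0
      · rw [hdj, mul_zero]
      exfalso
      apply hk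
      rw [hK, Finset.mem_add]
      exact ⟨j, hc.mem_toFinset.mpr hcj, k - j, hd.mem_toFinset.mpr hdj, by abel⟩
    have hzz : (∑' j : ℤ × ℤ, c j * d (k - j)) = 0 := by
      calc (∑' j : ℤ × ℤ, c j * d (k - j)) = ∑' _ : ℤ × ℤ, (0:ℂ) := tsum_congr hz
        _ = 0 := tsum_zero
    rw [hzz]
    simp
  have hLHS : (∑' k : ℤ × ℤ, (1 + (k.1 : ℝ) ^ 2 + (k.2 : ℝ) ^ 2) ^ (s₁ + s₂ - 1) *
        ‖∑' j : ℤ × ℤ, c j * d (k - j)‖ ^ 2)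
      = ∑ k ∈ K, (1 + (k.1 : ℝ) ^ 2 + (k.2 : ℝ) ^ 2) ^ (s₁ + s₂ - 1) *
        ‖∑' j : ℤ × ℤ, c j * d (k - j)‖ ^ 2 :=
    tsum_eq_sum fun k hk => hKz k hk
  have hRc : (∑' k : ℤ × ℤ, (1 + (k.1 : ℝ) ^ 2 + (k.2 : ℝ) ^ 2) ^ s₁ * ‖c k‖ ^ 2)
      = ∑ k ∈ sc, (1 + (k.1 : ℝ) ^ 2 + (k.2 : ℝ) ^ 2) ^ s₁ * ‖c k‖ ^ 2 := by
    apply tsum_eq_sum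
    intro k hk
    rw [hcs k hk]
    simp
  have hRd : (∑' k : ℤ × ℤ, (1 + (k.1 : ℝ) ^ 2 + (k.2 : ℝ) ^ 2) ^ s₂ * ‖d k‖ ^ 2)
      = ∑ k ∈ sd, (1 + (k.1 : ℝ) ^ 2 + (k.2 : ℝ) ^ 2) ^ s₂ * ‖d k‖ ^ 2 := by
    apply tsum_eq_sum
    intro k hk
    rw [hds k hk]
    simp
  rw [hLHS, hRc, hRd]
  have hterm : ∀ k ∈ K,
      (1 + (k.1 : ℝ) ^ 2 + (k.2 : ℝ) ^ 2) ^ (s₁ + s₂ - 1) *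
        ‖∑' j : ℤ × ℤ, c j * d (k - j)‖ ^ 2
      ≤ wt k ^ (s₁ + s₂ - 1) * (∑ j ∈ sc, ‖c j‖ * ‖d (k - j)‖) ^ 2 := by
    intro k _
    rw [hF k]
    have hn : ‖∑ j ∈ sc, c j * d (k - j)‖ ≤ ∑ j ∈ sc, ‖c j‖ * ‖d (k - j)‖ := by
      refine (norm_sum_le _ _).trans ?_
      refine Finset.sum_le_sum fun j _ => ?_
      rw [norm_mul]
    have hsq : ‖∑ j ∈ sc, c j * d (k - j)‖ ^ 2
        ≤ (∑ j ∈ sc, ‖c j‖ * ‖d (k - j)‖) ^ 2 :=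
      pow_le_pow_left₀ (norm_nonneg _) hn 2
    exact mul_le_mul_of_nonneg_left hsq (Real.rpow_nonneg (wt_pos k).le _)
  calc ∑ k ∈ K, (1 + (k.1 : ℝ) ^ 2 + (k.2 : ℝ) ^ 2) ^ (s₁ + s₂ - 1) *
        ‖∑' j : ℤ × ℤ, c j * d (k - j)‖ ^ 2
      ≤ ∑ k ∈ K, wt k ^ (s₁ + s₂ - 1) * (∑ j ∈ sc, ‖c j‖ * ‖d (k - j)‖) ^ 2 :=
        Finset.sum_le_sum hterm
    _ ≤ C * (∑ j ∈ sc, wt j ^ s₁ * ‖c j‖ ^ 2) * (∑ l ∈ sd, wt l ^ s₂ * ‖d l‖ ^ 2) :=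
        hcore K sc sd (fun j => ‖c j‖) (fun l => ‖d l‖)
          (fun j => norm_nonneg _) (fun l => norm_nonneg _)
          (fun l hl => by show ‖d l‖ = 0; rw [hds l hl, norm_zero])
    _ = C * (∑ k ∈ sc, (1 + (k.1 : ℝ) ^ 2 + (k.2 : ℝ) ^ 2) ^ s₁ * ‖c k‖ ^ 2) *
        (∑ k ∈ sd, (1 + (k.1 : ℝ) ^ 2 + (k.2 : ℝ) ^ 2) ^ s₂ * ‖d k‖ ^ 2) := rfl
end

section
/- Let κ, λ, c > 0 and Y > 0. Let y : [0,1] → (0,∞) be differentiable with y(0) ≤ Y², and suppose that y'(t) ≤ −κ y(t)² / (Y² (e^{−λ t} + c²)) for all t ∈ [0,1]. Then y(1) ≤ Y² / (1 + (κ/(λ c²)) log((1 + c² e^{λ})/(1 + c²))). -/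
/-- (ODE comparison, estimate (4.13) of the paper.)
Let `κ, λ, c > 0`, `Y > 0`, and let `y : [0,1] → (0,∞)` be differentiable with
`y(0) ≤ Y²` and `y'(t) ≤ −κ y(t)²/(Y²(e^{−λt}+c²))` on `[0,1]`. Then
`y(1) ≤ Y²/(1 + (κ/(λc²)) log((1+c²e^λ)/(1+c²)))`. -/
theorem stmt_11 (κ lam c Y : ℝ) (hκ : 0 < κ) (hlam : 0 < lam) (hc : 0 < c) (hY : 0 < Y)
    (y y' : ℝ → ℝ)
    (hypos : ∀ t ∈ Set.Icc (0 : ℝ) 1, 0 < y t)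
    (hderiv : ∀ t ∈ Set.Icc (0 : ℝ) 1, HasDerivWithinAt y (y' t) (Set.Icc (0 : ℝ) 1) t)
    (h0 : y 0 ≤ Y ^ 2)
    (hineq : ∀ t ∈ Set.Icc (0 : ℝ) 1,
      y' t ≤ -κ * (y t) ^ 2 / (Y ^ 2 * (Real.exp (-lam * t) + c ^ 2))) :
    y 1 ≤ Y ^ 2 /
      (1 + κ / (lam * c ^ 2) *
        Real.log ((1 + c ^ 2 * Real.exp lam) / (1 + c ^ 2))) := by
  set A : ℝ := κ / (Y ^ 2 * lam * c ^ 2) with hA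
  have hA0 : 0 < A := by positivity
  set g : ℝ → ℝ := fun t => (y t)⁻¹ - A * Real.log (1 + c ^ 2 * Real.exp (lam * t)) with hg
  -- derivative of log part
  have hlog : ∀ t : ℝ, HasDerivAt (fun t => A * Real.log (1 + c ^ 2 * Real.exp (lam * t)))
      (A * (c ^ 2 * (Real.exp (lam * t) * lam)) / (1 + c ^ 2 * Real.exp (lam * t))) t := by
    intro t
    have h1 : HasDerivAt (fun t : ℝ => lam * t) lam t := by
      simpa using (hasDerivAt_id t).const_mul lam
    have h2 := (h1.exp.const_mul (c ^ 2)).const_add 1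
    have hpos : (0:ℝ) < 1 + c ^ 2 * Real.exp (lam * t) := by positivity
    have h3 := (h2.log hpos.ne').const_mul A
    simpa [mul_div_assoc, mul_comm, mul_left_comm] using h3
  have hmono : MonotoneOn g (Set.Icc (0:ℝ) 1) := by
    apply monotoneOn_of_hasDerivWithinAt_nonneg (convex_Icc 0 1)
      (f' := fun t => -y' t / (y t) ^ 2 - A * (c ^ 2 * (Real.exp (lam * t) * lam)) / (1 + c ^ 2 * Real.exp (lam * t)))
    · intro t ht
      have := ((hderiv t ht).inv (hypos t ht).ne').sub
        ((hlog t).hasDerivWithinAt)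
      exact this.continuousWithinAt
    · intro t ht
      rw [interior_Icc] at ht
      have ht' : t ∈ Set.Icc (0:ℝ) 1 := Set.Ioo_subset_Icc_self ht
      have := ((hderiv t ht').inv (hypos t ht').ne').sub ((hlog t).hasDerivWithinAt)
      rw [interior_Icc]
      exact this.mono Set.Ioo_subset_Icc_self
    · intro t ht
      rw [interior_Icc] at ht
      have ht' : t ∈ Set.Icc (0:ℝ) 1 := Set.Ioo_subset_Icc_self ht
      have hyt := hypos t ht'
      have hE : (0:ℝ) < Real.exp (lam * t) := Real.exp_pos _
      have hD : (0:ℝ) < Y ^ 2 * (Real.exp (-lam * t) + c ^ 2) := by positivity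
      have key : A * (c ^ 2 * (Real.exp (lam * t) * lam)) / (1 + c ^ 2 * Real.exp (lam * t))
          = κ / (Y ^ 2 * (Real.exp (-lam * t) + c ^ 2)) := by
        rw [hA]
        have : Real.exp (-lam * t) = (Real.exp (lam * t))⁻¹ := by
          rw [← Real.exp_neg]; ring_nf
        rw [this]
        field_simp
      rw [key, sub_nonneg, div_le_div_iff₀ (by positivity) (by positivity)]
      have h1 : y' t ≤ -κ * (y t) ^ 2 / (Y ^ 2 * (Real.exp (-lam * t) + c ^ 2)) := hineq t ht'
      have h2 : κ * (y t) ^ 2 ≤ -y' t * (Y ^ 2 * (Real.exp (-lam * t) + c ^ 2)) := by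
        rw [le_div_iff₀ hD] at h1
        nlinarith
      linarith [h2]
  have h01 : (0:ℝ) ∈ Set.Icc (0:ℝ) 1 := by norm_num
  have h11 : (1:ℝ) ∈ Set.Icc (0:ℝ) 1 := by norm_num
  have hg01 : g 0 ≤ g 1 := hmono h01 h11 (by norm_num)
  have hy0 := hypos 0 h01
  have hy1 := hypos 1 h11
  -- z 1 ≥ z 0 + A * log ratio
  have hL : Real.log (1 + c ^ 2 * Real.exp (lam * 1)) - Real.log (1 + c ^ 2 * Real.exp (lam * 0))
      = Real.log ((1 + c ^ 2 * Real.exp lam) / (1 + c ^ 2)) := by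
    rw [Real.log_div (by positivity) (by positivity)]
    norm_num
  set L : ℝ := Real.log ((1 + c ^ 2 * Real.exp lam) / (1 + c ^ 2)) with hLdef
  have hLpos : 0 < L := by
    apply Real.log_pos
    rw [lt_div_iff₀ (by positivity)]
    have h1 : (1:ℝ) < Real.exp lam := by nlinarith [Real.add_one_le_exp lam]
    nlinarith [pow_pos hc 2]
  have hz1 : (y 0)⁻¹ + A * L ≤ (y 1)⁻¹ := by
    have : (y 0)⁻¹ - A * Real.log (1 + c ^ 2 * Real.exp (lam * 0))
        ≤ (y 1)⁻¹ - A * Real.log (1 + c ^ 2 * Real.exp (lam * 1)) := hg01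
    nlinarith [hL]
  have hz0 : (Y ^ 2)⁻¹ ≤ (y 0)⁻¹ := by
    apply inv_anti₀ hy0 h0
  have hRpos : 0 < 1 + κ / (lam * c ^ 2) * L := by positivity
  have hfinal : (Y ^ 2)⁻¹ * (1 + κ / (lam * c ^ 2) * L) ≤ (y 1)⁻¹ := by
    have : (Y ^ 2)⁻¹ * (1 + κ / (lam * c ^ 2) * L) = (Y ^ 2)⁻¹ + A * L := by
      rw [hA]; field_simp
    rw [this]
    linarith [hz1, hz0]
  have step : y 1 ≤ ((Y ^ 2)⁻¹ * (1 + κ / (lam * c ^ 2) * L))⁻¹ := by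
    rw [← inv_inv (y 1)]
    exact inv_anti₀ (by positivity) hfinal
  calc y 1 ≤ ((Y ^ 2)⁻¹ * (1 + κ / (lam * c ^ 2) * L))⁻¹ := step
    _ = Y ^ 2 / (1 + κ / (lam * c ^ 2) * L) := by
        rw [mul_inv, inv_inv]; ring
end
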